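/- arXiv:2103.10835 — 3 statements merged into one kernel-verified Lean document; each statement's English description precedes it below -/
import Mathlib

section
/- The family of IP-subsets of ℤ has the Ramsey property: if A is an IP-set in ℤ and A = A₁ ∪ A₂, then A₁ or A₂ contains an IP-set. -/
open Set Pointwise

/-- The set of finite sums of a sequence of integers. -/
def FS (n : ℕ → ℤ) : Set ℤ :=
  {m | ∃ s : Finset ℕ, s.Nonempty ∧ m = ∑ i ∈ s, n i}

/-- `A` is an IP-set if it contains all finite sums of some integer sequence. -/
def IsIPSet (A : Set ℤ) : Prop := ∃ n : ℕ → ℤ, FS n ⊆ A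

/-- `B` is an IP*-set if it meets every IP-set. -/
def IsIPStar (B : Set ℤ) : Prop := ∀ A : Set ℤ, IsIPSet A → (B ∩ A).Nonempty

/-- `α < β` for finite subsets of ℕ: every element of `α` is less than every element of `β`. -/
def FinsetLt (α β : Finset ℕ) : Prop := ∀ x ∈ α, ∀ y ∈ β, x < y

/-- A sequence `α₁ < α₂ < ⋯` of nonempty finite subsets of ℕ generating an IP-ring. -/
def IsIPRingSeq (a : ℕ → Finset ℕ) : Prop :=
  (∀ i, (a i).Nonempty) ∧ ∀ i, FinsetLt (a i) (a (i + 1))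

/-- The IP-ring `FU((αᵢ))`: all finite unions of the `αᵢ`. -/
def FU (a : ℕ → Finset ℕ) : Set (Finset ℕ) :=
  {s | ∃ β : Finset ℕ, β.Nonempty ∧ s = β.biUnion a}

/-- `n_α = ∑_{i ∈ α} nᵢ`. -/
def sumIdx (n : ℕ → ℤ) (α : Finset ℕ) : ℤ := ∑ i ∈ α, n i

/-- The family `𝒢_A` of subsets of ℤ containing some IP-subset of the
IP-set `A = {n_α}_{α ∈ ℱ}`. -/
def GA (n : ℕ → ℤ) : Set (Set ℤ) :=
  {B | ∃ a : ℕ → Finset ℕ, IsIPRingSeq a ∧ sumIdx n '' FU a ⊆ B}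

/-- The dual family `𝒢*`. -/
def dualFam (G : Set (Set ℤ)) : Set (Set ℤ) :=
  {B | ∀ A ∈ G, (B ∩ A).Nonempty}

/-- Natural powers of a homeomorphism. -/
def hnpow {X : Type*} [TopologicalSpace X] (T : X ≃ₜ X) : ℕ → X ≃ₜ X
  | 0 => Homeomorph.refl X
  | (k + 1) => (hnpow T k).trans T

/-- Integer powers of a homeomorphism. -/
def hzpow {X : Type*} [TopologicalSpace X] (T : X ≃ₜ X) : ℤ → X ≃ₜ X
  | Int.ofNat k => hnpow T k
  | Int.negSucc k => (hnpow T (k + 1)).symm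

/-- A homeomorphism is minimal if every (two-sided) orbit is dense. -/
def IsMinimalHomeo {X : Type*} [TopologicalSpace X] (T : X ≃ₜ X) : Prop :=
  ∀ x : X, Dense (Set.range fun m : ℤ => hzpow T m x)

/-- `(X,T)` is mixing along the IP-set `A = {n_α}`: every `N(U,V)` belongs to `𝒢_A*`. -/
def MixingAlong {X : Type*} [TopologicalSpace X] (T : X ≃ₜ X) (n : ℕ → ℤ) : Prop :=
  ∀ U V : Set X, IsOpen U → IsOpen V → U.Nonempty → V.Nonempty →
    {m : ℤ | (U ∩ hzpow T m ⁻¹' V).Nonempty} ∈ dualFam (GA n)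

/-- `(X,T)` is topologically mildly mixing: every `N(U,V)` is an IP*-set. -/
def TopMildlyMixing {X : Type*} [TopologicalSpace X] (T : X ≃ₜ X) : Prop :=
  ∀ U V : Set X, IsOpen U → IsOpen V → U.Nonempty → V.Nonempty →
    IsIPStar {m : ℤ | (U ∩ hzpow T m ⁻¹' V).Nonempty}

/-- An integral polynomial: an integer-valued function which is given by a
polynomial (with rational coefficients) on ℤ. -/
def IsIntPoly (p : ℤ → ℤ) : Prop :=
  ∃ q : Polynomial ℚ, ∀ m : ℤ, (p m : ℚ) = q.eval (m : ℚ)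

theorem hindmanFS_eq_FS (a : Stream' ℤ) : Hindman.FS a = FS a.get := by
  refine Set.Subset.antisymm (fun m hm => ?_) ?_
  · induction hm with
    | head' a => exact ⟨{0}, Finset.singleton_nonempty 0, by simp [Stream'.head]⟩
    | tail' a m _ ih =>
      -- a sum over `a.tail` is a sum over `a` with the indices shifted by one
      obtain ⟨s, hs, rfl⟩ := ih
      refine ⟨s.image (· + 1), hs.image _, ?_⟩
      rw [Finset.sum_image (fun x _ y _ h => by simpa using h)]
      rfl
    | cons' a m _ ih =>
      obtain ⟨s, hs, rfl⟩ := ih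
      refine ⟨insert 0 (s.image (· + 1)), Finset.insert_nonempty _ _, ?_⟩
      rw [Finset.sum_insert (by simp), Finset.sum_image (fun x _ y _ h => by simpa using h)]
      rfl
  · rintro m ⟨s, hs, rfl⟩
    exact Hindman.FS.finsetSum a s hs

theorem IsIPSet.exists_mem_isIPSet_of_subset_sUnion {A : Set ℤ} (hA : IsIPSet A)
    {s : Set (Set ℤ)} (hs : s.Finite) (hcov : A ⊆ ⋃₀ s) : ∃ c ∈ s, IsIPSet c := by
  obtain ⟨n, hn⟩ := hA
  obtain ⟨c, hc, b, hb⟩ := Hindman.FS_partition_regular (n : Stream' ℤ) s hs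
    ((hindmanFS_eq_FS n).trans_subset (hn.trans hcov))
  exact ⟨c, hc, b.get, (hindmanFS_eq_FS b).symm.trans_subset hb⟩

/-- The family of IP-sets has the Ramsey property: if an IP-set is split into two
pieces, one of the pieces contains an IP-set. -/
theorem ipset_ramsey (A A₁ A₂ : Set ℤ) (hA : IsIPSet A) (hsplit : A = A₁ ∪ A₂) :
    IsIPSet A₁ ∨ IsIPSet A₂ := by
  obtain ⟨c, hc, hIP⟩ := hA.exists_mem_isIPSet_of_subset_sUnion (Set.toFinite {A₁, A₂})
    (by rw [hsplit, Set.sUnion_pair])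
  rcases hc with rfl | rfl
  · exact Or.inl hIP
  · exact Or.inr hIP
end

section
/- For any finite partition of the collection ℱ of all nonempty finite subsets of ℕ into r cells, one of the cells contains an IP-ring, i.e., a set of the form FU((αᵢ)) = {⋃_{i∈β} αᵢ : β ∈ ℱ} for some sequence α₁ < α₂ < ⋯ of nonempty finite subsets of ℕ (where α < β means max α < min β). -/
open Set Pointwise

/-!
Apply Hindman's finite-sums theorem in the additive monoid `Multiset ℕ` to the stream of
singletons `{n}`. Its finite sums are the nonempty finsets, and a sum of multisets is duplicate-free
only if the summands are disjoint, so a monochromatic FS-set is a sequence of pairwise disjoint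
finsets all of whose finite unions lie in one cell. Since the finsets are disjoint, only finitely
many of them meet any initial segment of `ℕ`, so a subsequence is increasing for `<`.
-/
open Function

namespace Hindman

theorem FS.exists_finsetSum_eq {M : Type*} [AddCommMonoid M] {a : Stream' M} {m : M}
    (hm : m ∈ FS a) : ∃ s : Finset ℕ, s.Nonempty ∧ ∑ i ∈ s, a.get i = m := by
  induction hm with
  | head' a => exact ⟨{0}, Finset.singleton_nonempty 0, Finset.sum_singleton _ _⟩
  | tail' a m _ ih =>
    obtain ⟨s, hs, rfl⟩ := ih
    refine ⟨s.image Nat.succ, hs.image _, ?_⟩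
    rw [Finset.sum_image fun _ _ _ _ h => Nat.succ_injective h]
    rfl
  | cons' a m _ ih =>
    obtain ⟨s, -, rfl⟩ := ih
    refine ⟨insert 0 (s.image Nat.succ), Finset.insert_nonempty _ _, ?_⟩
    rw [Finset.sum_insert (by simp), Finset.sum_image fun _ _ _ _ h => Nat.succ_injective h]
    rfl

end Hindman

theorem Finset.val_biUnion_of_pairwiseDisjoint {ι α : Type*} [DecidableEq α] {s : Finset ι}
    {t : ι → Finset α} (h : (s : Set ι).PairwiseDisjoint t) :
    (s.biUnion t).val = ∑ i ∈ s, (t i).val := by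
  rw [← Finset.disjiUnion_eq_biUnion s t h, Finset.disjiUnion_val, Finset.sum_eq_multiset_sum]
  rfl

theorem exists_forall_lt_of_pairwise_disjoint {S : ℕ → Finset ℕ}
    (hS : Pairwise (Disjoint on S)) (m : ℕ) : ∃ k, ∀ x ∈ S k, m < x := by
  have hfin : {k | ∃ x ∈ S k, x ≤ m}.Finite := by
    have : {k | ∃ x ∈ S k, x ≤ m} = ⋃ x ∈ Set.Iic m, {k | x ∈ S k} := by
      ext k; simp [and_comm]
    rw [this]
    refine (Set.finite_Iic m).biUnion fun x _ => Set.Subsingleton.finite ?_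
    intro j hj k hk
    by_contra hjk
    exact Finset.disjoint_left.mp (hS hjk) hj hk
  obtain ⟨k, hk⟩ := hfin.exists_notMem
  exact ⟨k, by simpa using hk⟩

theorem exists_seq_finsetLt_of_pairwise_disjoint {S : ℕ → Finset ℕ}
    (hS : Pairwise (Disjoint on S)) :
    ∃ f : ℕ → ℕ, ∀ m n, m < n → FinsetLt (S (f m)) (S (f n)) := by
  obtain ⟨f, -, hf⟩ := exists_seq_of_forall_finset_exists (fun _ => True)
    (fun j k => FinsetLt (S j) (S k)) fun s _ => by
      obtain ⟨k, hk⟩ := exists_forall_lt_of_pairwise_disjoint hS ((s.biUnion S).sup id)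
      refine ⟨k, trivial, fun j hj x hx y hy => ?_⟩
      have hx_le : x ≤ (s.biUnion S).sup id :=
        Finset.le_sup (f := id) (Finset.mem_biUnion.mpr ⟨j, hj, hx⟩)
      exact hx_le.trans_lt (hk y hy)
  exact ⟨f, hf⟩

theorem exists_pairwise_disjoint_forall_biUnion_mem {ι : Type*} [Finite ι]
    (C : ι → Set (Finset ℕ)) (hcover : ∀ α : Finset ℕ, α.Nonempty → ∃ i, α ∈ C i) :
    ∃ i, ∃ S : ℕ → Finset ℕ, (∀ k, (S k).Nonempty) ∧ Pairwise (Disjoint on S) ∧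
      ∀ β : Finset ℕ, β.Nonempty → β.biUnion S ∈ C i := by
  let cell : ι → Set (Multiset ℕ) := fun i => Finset.val '' {α ∈ C i | α.Nonempty}
  have hcov : Hindman.FS (fun n => ({n} : Multiset ℕ)) ⊆ ⋃₀ Set.range cell := by
    intro m hm
    obtain ⟨α, hα, rfl⟩ := Hindman.FS.exists_finsetSum_eq hm
    obtain ⟨i, hi⟩ := hcover α hα
    refine ⟨cell i, ⟨i, rfl⟩, α, ⟨hi, hα⟩, ?_⟩
    rw [Finset.sum_eq_multiset_sum]
    exact (Multiset.sum_map_singleton _).symm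
  obtain ⟨_, ⟨i, rfl⟩, b, hb⟩ :=
    Hindman.FS_partition_regular _ _ (Set.finite_range cell) hcov
  choose S hS hSb using fun k => hb (Hindman.FS.singleton b k)
  have hdisj : Pairwise (Disjoint on S) := by
    refine (symm_disjoint.pairwise_on S).2 fun j k hjk => ?_
    obtain ⟨α, -, hα⟩ := hb (Hindman.FS.add_two b j k hjk)
    rw [← hSb, ← hSb] at hα
    have hnodup := α.nodup
    rw [hα, Multiset.nodup_add] at hnodup
    exact Finset.disjoint_val.mp hnodup.2.2
  refine ⟨i, S, fun k => (hS k).2, hdisj, fun β hβ => ?_⟩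
  obtain ⟨α, hα, hαβ⟩ := hb (Hindman.FS.finsetSum b β hβ)
  simp_rw [← hSb, ← Finset.val_biUnion_of_pairwiseDisjoint (hdisj.set_pairwise _)] at hαβ
  exact Finset.val_injective hαβ ▸ hα.1

/-- Hindman's theorem for IP-rings: for any finite partition of the collection of
nonempty finite subsets of ℕ into `r` cells, one cell contains an IP-ring. -/
theorem hindman_ipring (r : ℕ) (C : Fin r → Set (Finset ℕ))
    (hcover : ∀ α : Finset ℕ, α.Nonempty → ∃ i, α ∈ C i) :
    ∃ i, ∃ a : ℕ → Finset ℕ, IsIPRingSeq a ∧ FU a ⊆ C i := by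
  obtain ⟨i, S, hne, hdisj, hunion⟩ := exists_pairwise_disjoint_forall_biUnion_mem C hcover
  obtain ⟨f, hf⟩ := exists_seq_finsetLt_of_pairwise_disjoint hdisj
  refine ⟨i, S ∘ f, ⟨fun k => hne (f k), fun k => hf k (k + 1) k.lt_succ_self⟩, ?_⟩
  rintro _ ⟨β, hβ, rfl⟩
  have := hunion _ (hβ.image f)
  rwa [Finset.image_biUnion] at this
end

section
/- Let X be a compact metric space, d ∈ ℕ, and T₁,…,T_d commuting homeomorphisms of X. Let A = {n_α}_{α∈ℱ} be an IP-set in ℤ. Suppose that for all 1 ≤ i ≤ d and all j ≠ k in {1,…,d}, the systems (X,Tᵢ) and (X, T_j T_k⁻¹) are minimal and mixing along A. Then for all nonempty open subsets U, V₁,…,V_d of X, the set {n ∈ ℤ : U ∩ T₁^{-n}V₁ ∩ ⋯ ∩ T_d^{-n}V_d ≠ ∅} belongs to 𝒢_A*. -/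
/-!
Choose an idempotent ultrafilter `p` on `ℤ` containing the given IP-set all of whose members lie in
`𝒢_A`: by Hindman's theorem in the semigroup of finite subsets of `ℕ` under ordered union, pushed
forward along `α ↦ n_α`. Every `𝒢_A*`-set then belongs to `p`, the maps are mixing along `p`, and
it suffices that the diagonal orbit `{(T₁ⁿ x, …, T_dⁿ x) : x ∈ U}` has ω-limit all of `X^d` along
`p`. This goes by induction on `d`: the induction hypothesis for the maps `Tᵢ₊₁ T₁⁻¹` makes the
orbit of the full diagonal dense; minimality of `T₁` covers `X` by finitely many `T₁⁻ᵏ U`, so by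
Baire the ω-limit of `U` has interior; mixing spreads a box inside it over `X^d`, and idempotence
of `p` gives `ω (ω s) ⊆ ω s`.
-/

open Set Pointwise

section UltrafilterMap

open Filter

attribute [local instance] Ultrafilter.mul Ultrafilter.add

theorem Ultrafilter.map_add_map_eq_of_eventually {M N : Type*} [Semigroup M] [Add N]
    {q : Ultrafilter M} (hq : q * q = q) {f : M → N}
    (hf : ∀ᶠ x in q, ∀ᶠ y in q, f (x * y) = f x + f y) : q.map f + q.map f = q.map f := by
  refine Ultrafilter.eq_of_le fun s hs => ?_
  rw [Ultrafilter.mem_coe, Ultrafilter.mem_map, ← hq] at hs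
  change ∀ᶠ x in (q : Filter M), ∀ᶠ y in (q : Filter M), f x + f y ∈ s
  filter_upwards [hf, (Ultrafilter.eventually_mul q q _).1 hs] with x hfx hsx
  filter_upwards [hfx, hsx] with y hfxy hsxy
  rwa [← hfxy]

end UltrafilterMap

lemma finsetLt_union_left {α β γ : Finset ℕ} :
    FinsetLt (α ∪ β) γ ↔ FinsetLt α γ ∧ FinsetLt β γ := by
  simp only [FinsetLt, Finset.mem_union]
  grind

lemma finsetLt_union_right {α β γ : Finset ℕ} :
    FinsetLt α (β ∪ γ) ↔ FinsetLt α β ∧ FinsetLt α γ := by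
  simp only [FinsetLt, Finset.mem_union]
  grind

lemma FinsetLt.disjoint {α β : Finset ℕ} (h : FinsetLt α β) : Disjoint α β :=
  Finset.disjoint_left.2 fun x hα hβ => (h x hα x hβ).false

instance : DecidableRel FinsetLt := fun α β => by unfold FinsetLt; infer_instance

lemma IsIPRingSeq.finsetLt {a : ℕ → Finset ℕ} (ha : IsIPRingSeq a) {i j : ℕ} (hij : i < j) :
    FinsetLt (a i) (a j) := by
  induction j, hij using Nat.le_induction with
  | base => exact ha.2 i
  | succ j hij ih =>
    obtain ⟨y, hy⟩ := ha.1 j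
    exact fun x hx z hz => (ih x hx y hy).trans (ha.2 j y hy z hz)

lemma IsIPRingSeq.finsetLt_biUnion {a : ℕ → Finset ℕ} (ha : IsIPRingSeq a) {j : ℕ}
    {β : Finset ℕ} (hβ : ∀ i ∈ β, j < i) : FinsetLt (a j) (β.biUnion a) := by
  intro x hx y hy
  obtain ⟨i, hi, hy⟩ := Finset.mem_biUnion.1 hy
  exact ha.finsetLt (hβ i hi) x hx y hy

/-- Finite subsets of `ℕ` under the union of consecutive blocks: `block α * block β` is
`block (α ∪ β)` when `α < β`, and every other product is the absorbing `collision`. -/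
def OrderedUnion : Type := Option (Finset ℕ)

namespace OrderedUnion

open Hindman

def block (α : Finset ℕ) : OrderedUnion := Option.some α

def collision : OrderedUnion := Option.none

instance : Mul OrderedUnion where
  mul
    | Option.some α, Option.some β => if FinsetLt α β then block (α ∪ β) else collision
    | _, _ => collision

lemma block_mul_block (α β : Finset ℕ) :
    block α * block β = if FinsetLt α β then block (α ∪ β) else collision := rfl

@[simp] lemma collision_mul (x : OrderedUnion) : collision * x = collision := rfl

@[simp] lemma mul_collision (x : OrderedUnion) : x * collision = collision := by
  cases x <;> rfl

lemma eq_collision_or_eq_block (x : OrderedUnion) : x = collision ∨ ∃ α, x = block α := by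
  cases x with
  | none => exact Or.inl rfl
  | some α => exact Or.inr ⟨α, rfl⟩

instance : Semigroup OrderedUnion where
  mul_assoc x y z := by
    rcases eq_collision_or_eq_block x with rfl | ⟨α, rfl⟩ <;>
    rcases eq_collision_or_eq_block y with rfl | ⟨β, rfl⟩ <;>
    rcases eq_collision_or_eq_block z with rfl | ⟨γ, rfl⟩ <;>
    try simp only [collision_mul, mul_collision]
    rw [block_mul_block α β, block_mul_block β γ]
    by_cases hαβ : FinsetLt α β <;> by_cases hβγ : FinsetLt β γ <;> by_cases hαγ : FinsetLt α γ <;>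
      simp [hαβ, hβγ, hαγ, block_mul_block, finsetLt_union_left, finsetLt_union_right,
        Finset.union_assoc]


def blocks (a : ℕ → Finset ℕ) : Stream' OrderedUnion := fun j => block (a j)

@[simp] lemma get_blocks (a : ℕ → Finset ℕ) (j : ℕ) : (blocks a).get j = block (a j) := rfl

lemma block_mul_block_biUnion {a : ℕ → Finset ℕ} (ha : IsIPRingSeq a) {j : ℕ}
    {β : Finset ℕ} (hβ : ∀ i ∈ β, j < i) :
    block (a j) * block (β.biUnion a) = block ((insert j β).biUnion a) := by
  rw [block_mul_block, if_pos (ha.finsetLt_biUnion hβ), Finset.biUnion_insert]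

lemma exists_eq_block_of_mem_FP_drop {a : ℕ → Finset ℕ} (ha : IsIPRingSeq a) {k : ℕ}
    {m : OrderedUnion} (hm : m ∈ FP ((blocks a).drop k)) :
    ∃ β : Finset ℕ, β.Nonempty ∧ (∀ i ∈ β, k ≤ i) ∧ m = block (β.biUnion a) := by
  generalize hc : (blocks a).drop k = c at hm
  induction hm generalizing k with
  | head' c =>
    subst hc
    exact ⟨{k}, Finset.singleton_nonempty k, by simp, by simp⟩
  | tail' c m _ ih =>
    obtain ⟨β, hβ, hk, rfl⟩ := ih (k := k + 1) (by rw [← hc, Stream'.tail_drop'])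
    exact ⟨β, hβ, fun i hi => Nat.le_of_succ_le (hk i hi), rfl⟩
  | cons' c m _ ih =>
    obtain ⟨β, -, hk, rfl⟩ := ih (k := k + 1) (by rw [← hc, Stream'.tail_drop'])
    subst hc
    refine ⟨insert k β, Finset.insert_nonempty k β,
      by simpa using fun i hi => Nat.le_of_succ_le (hk i hi), ?_⟩
    rw [Stream'.head_drop, ← block_mul_block_biUnion ha hk]
    rfl

lemma block_biUnion_mem_FP_drop {a : ℕ → Finset ℕ} (ha : IsIPRingSeq a) {β : Finset ℕ}
    (hβ : β.Nonempty) {k : ℕ} (hk : ∀ i ∈ β, k ≤ i) :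
    block (β.biUnion a) ∈ FP ((blocks a).drop k) := by
  induction β using Finset.induction_on_min generalizing k with
  | empty => exact absurd hβ Finset.not_nonempty_empty
  | insert j β hjβ ih =>
    have hkj : k ≤ j := hk j (Finset.mem_insert_self j β)
    refine FP_drop_subset_FP _ (j - k) ?_
    rw [Stream'.drop_drop, Nat.add_sub_cancel' hkj]
    rcases β.eq_empty_or_nonempty with rfl | hne
    · simpa [Stream'.head_drop] using FP.head ((blocks a).drop j)
    · rw [← block_mul_block_biUnion ha hjβ]
      have := FP.cons ((blocks a).drop j) _ (by
        rw [Stream'.tail_drop']; exact ih hne fun i hi => hjβ i hi)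
      simpa [Stream'.head_drop] using this

theorem FP_blocks {a : ℕ → Finset ℕ} (ha : IsIPRingSeq a) : FP (blocks a) = block '' FU a := by
  ext m
  constructor
  · intro hm
    obtain ⟨β, hβ, -, rfl⟩ := exists_eq_block_of_mem_FP_drop ha (k := 0) hm
    exact ⟨_, ⟨β, hβ, rfl⟩, rfl⟩
  · rintro ⟨_, ⟨β, hβ, rfl⟩, rfl⟩
    exact block_biUnion_mem_FP_drop ha hβ (k := 0) fun i _ => i.zero_le

/-- `block α ↦ n_α`; the value at `collision` is junk. -/
def sum (n : ℕ → ℤ) : OrderedUnion → ℤ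
  | Option.some α => sumIdx n α
  | Option.none => 0

lemma sum_block (n : ℕ → ℤ) (α : Finset ℕ) : sum n (block α) = sumIdx n α := rfl

lemma finsetLt_of_block_mul_block_eq {α β γ : Finset ℕ} (h : block α * block β = block γ) :
    FinsetLt α β := by
  by_contra hαβ
  rw [block_mul_block, if_neg hαβ] at h
  cases h

lemma sum_block_mul_block {n : ℕ → ℤ} {α β γ : Finset ℕ} (h : block α * block β = block γ) :
    sum n (block α * block β) = sum n (block α) + sum n (block β) := by
  have hαβ := finsetLt_of_block_mul_block_eq h
  rw [block_mul_block, if_pos hαβ]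
  exact Finset.sum_union hαβ.disjoint

lemma mem_GA_of_FP_subset {n : ℕ → ℤ} {B : Set ℤ} {c : Stream' OrderedUnion}
    (hc : FP c ⊆ block '' {α | α.Nonempty}) (hB : FP c ⊆ sum n ⁻¹' B) : B ∈ GA n := by
  choose γ hγ hcγ using fun j => hc (FP.singleton c j)
  have hc_eq : c = blocks γ := funext fun j => (hcγ j).symm
  have hring : IsIPRingSeq γ := by
    refine ⟨hγ, fun j => ?_⟩
    obtain ⟨_, -, h⟩ := hc (FP.mul_two c j (j + 1) j.lt_succ_self)
    rw [hc_eq] at h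
    exact finsetLt_of_block_mul_block_eq h.symm
  refine ⟨γ, hring, ?_⟩
  rintro _ ⟨α, hα, rfl⟩
  rw [← sum_block]
  apply hB
  rw [hc_eq, FP_blocks hring]
  exact ⟨α, hα, rfl⟩

end OrderedUnion

section IdempotentUltrafilter

open Filter Hindman OrderedUnion

attribute [local instance] Ultrafilter.mul Ultrafilter.add

/-- Push an idempotent ultrafilter on `FP (blocks a)` forward along `α ↦ n_α`; each of its
members contains an `FP`-set of blocks (Hindman), i.e. an IP-ring. -/
theorem exists_add_idempotent_ultrafilter_subset_GA (n : ℕ → ℤ) {a : ℕ → Finset ℕ}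
    (ha : IsIPRingSeq a) :
    ∃ p : Ultrafilter ℤ, p + p = p ∧ sumIdx n '' FU a ∈ p ∧ ∀ B ∈ p, B ∈ GA n := by
  obtain ⟨q, hq, hFP⟩ := exists_idempotent_ultrafilter_le_FP (blocks a)
  rw [FP_blocks ha] at hFP
  have hne : block '' FU a ⊆ block '' {α | α.Nonempty} := by
    rintro _ ⟨_, ⟨β, hβ, rfl⟩, rfl⟩
    exact ⟨_, hβ.biUnion fun j _ => ha.1 j, rfl⟩
  refine ⟨q.map (sum n), ?_, ?_, fun B hB => ?_⟩
  · apply Ultrafilter.map_add_map_eq_of_eventually hq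
    have hFP2 : ∀ᶠ x in q, ∀ᶠ y in q, x * y ∈ block '' FU a := by
      rw [← Ultrafilter.eventually_mul, hq]
      exact hFP
    filter_upwards [hFP, hFP2] with x ⟨α, _, hx⟩ hxy
    filter_upwards [hFP, hxy] with y ⟨β, _, hy⟩ ⟨γ, _, hγ⟩
    subst hx hy
    exact sum_block_mul_block hγ.symm
  · rw [Ultrafilter.mem_map]
    filter_upwards [hFP] with x ⟨α, hα, hx⟩
    exact ⟨α, hα, by rw [← hx, sum_block]⟩
  · obtain ⟨c, hc⟩ := exists_FP_of_large q hq _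
      (inter_mem (Ultrafilter.mem_map.1 hB) (mem_of_superset hFP hne))
    exact mem_GA_of_FP_subset (fun _ h => (hc h).2) fun _ h => (hc h).1

end IdempotentUltrafilter

section OmegaLimit

open Filter Topology omegaLimit

attribute [local instance] Ultrafilter.add

variable {τ α β : Type*} [TopologicalSpace β]

lemma mem_omegaLimit_ultrafilter_iff (p : Ultrafilter τ) (ϕ : τ → α → β) (s : Set α) (y : β) :
    y ∈ ω (p : Filter τ) ϕ s ↔ ∀ N ∈ 𝓝 y, ∀ᶠ t in (p : Filter τ), (s ∩ ϕ t ⁻¹' N).Nonempty := by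
  simp only [mem_omegaLimit_iff_frequently, Ultrafilter.frequently_iff_eventually]

lemma omegaLimit_biUnion_finset {κ : Type*} (f : Filter τ) (ϕ : τ → α → β) (F : Finset κ)
    (s : κ → Set α) : ω f ϕ (⋃ k ∈ F, s k) = ⋃ k ∈ F, ω f ϕ (s k) := by
  classical
  induction F using Finset.induction_on with
  | empty =>
    ext y
    simpa [mem_omegaLimit_iff_frequently] using ⟨univ, univ_mem⟩
  | insert k F _ ih => simp only [Finset.set_biUnion_insert, omegaLimit_union, ih]

theorem omegaLimit_omegaLimit_subset_of_add_idem [AddSemigroup τ] {p : Ultrafilter τ}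
    (hp : p + p = p) {ϕ : τ → β → β} (hcont : ∀ t, Continuous (ϕ t))
    (hadd : ∀ t₁ t₂ x, ϕ (t₁ + t₂) x = ϕ t₁ (ϕ t₂ x)) (s : Set β) :
    ω (p : Filter τ) ϕ (ω (p : Filter τ) ϕ s) ⊆ ω (p : Filter τ) ϕ s := by
  intro z hz
  rw [mem_omegaLimit_ultrafilter_iff] at hz ⊢
  intro N hN
  rw [← hp, Ultrafilter.eventually_add]
  filter_upwards [hz _ (interior_mem_nhds.2 hN)] with t₁ ⟨w, hw, hwN⟩
  rw [mem_omegaLimit_ultrafilter_iff] at hw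
  have hN' := (hcont t₁).continuousAt.preimage_mem_nhds (isOpen_interior.mem_nhds hwN)
  filter_upwards [hw _ hN'] with t₂ ⟨x, hx, hxN⟩
  exact ⟨x, hx, show ϕ (t₁ + t₂) x ∈ N by rw [hadd]; exact interior_subset hxN⟩

lemma exists_univ_pi_subset_of_mem_nhds {ι : Type*} {A : ι → Type*} [∀ i, TopologicalSpace (A i)]
    {z : ∀ i, A i} {N : Set (∀ i, A i)} (hN : N ∈ 𝓝 z) :
    ∃ t : ∀ i, Set (A i), (∀ i, t i ∈ 𝓝 (z i)) ∧ univ.pi t ⊆ N := by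
  rw [nhds_pi, Filter.mem_pi] at hN
  obtain ⟨I, -, t, ht, hIN⟩ := hN
  exact ⟨t, ht, (pi_mono' (fun _ _ => subset_rfl) (subset_univ I)).trans hIN⟩

theorem univ_pi_omegaLimit_subset {ι : Type*} [Finite ι] {A B : ι → Type*}
    [∀ i, TopologicalSpace (B i)] (p : Ultrafilter τ) (ϕ : ∀ i, τ → A i → B i)
    (s : ∀ i, Set (A i)) :
    univ.pi (fun i => ω (p : Filter τ) (ϕ i) (s i)) ⊆
      ω (p : Filter τ) (fun t => Pi.map fun i => ϕ i t) (univ.pi s) := by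
  intro y hy
  rw [mem_omegaLimit_ultrafilter_iff]
  intro N hN
  obtain ⟨u, hu, huN⟩ := exists_univ_pi_subset_of_mem_nhds hN
  have hy' := fun i => (mem_omegaLimit_ultrafilter_iff p _ _ _).1 (hy i (mem_univ i)) (u i) (hu i)
  filter_upwards [eventually_all.2 hy'] with t ht
  choose x hxs hxu using ht
  exact ⟨x, fun i _ => hxs i, huN fun i _ => hxu i⟩

end OmegaLimit

section Dynamics

open Filter Topology omegaLimit Function

attribute [local instance] Ultrafilter.add

variable {X : Type*} [TopologicalSpace X]

lemma hnpow_eq_pow (T : X ≃ₜ X) (k : ℕ) : hnpow T k = T ^ k := by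
  induction k with
  | zero => rfl
  | succ k ih => rw [pow_succ', ← ih]; rfl

lemma hzpow_eq_zpow (T : X ≃ₜ X) (m : ℤ) : hzpow T m = T ^ m := by
  cases m with
  | ofNat k => exact (hnpow_eq_pow T k).trans (zpow_natCast T k).symm
  | negSucc k =>
    exact (congrArg Homeomorph.symm (hnpow_eq_pow T (k + 1))).trans (zpow_negSucc T k).symm

lemma IsMinimalHomeo.exists_finset_cover [CompactSpace X] {T : X ≃ₜ X} (hT : IsMinimalHomeo T)
    {U : Set X} (hU : IsOpen U) (hUne : U.Nonempty) :
    ∃ F : Finset ℤ, univ ⊆ ⋃ k ∈ F, ⇑(T ^ k) ⁻¹' U := by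
  refine isCompact_univ.elim_finite_subcover _ (fun k => hU.preimage (T ^ k).continuous) ?_
  intro x _
  obtain ⟨_, ⟨k, rfl⟩, hk⟩ := (hT x).exists_mem_open hU hUne
  exact mem_iUnion.2 ⟨k, by rwa [← hzpow_eq_zpow]⟩

/-- The ultrafilter version of `MixingAlong`: `N(U, V) ∈ p` for all nonempty open `U`, `V`. -/
def MixingAlongUltrafilter (p : Ultrafilter ℤ) (T : X ≃ₜ X) : Prop :=
  ∀ U : Set X, IsOpen U → U.Nonempty → ω (p : Filter ℤ) (fun n => ⇑(T ^ n)) U = univ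

lemma mem_of_mem_dualFam {G : Set (Set ℤ)} {p : Ultrafilter ℤ} (hp : ∀ B ∈ p, B ∈ G)
    {N : Set ℤ} (hN : N ∈ dualFam G) : N ∈ p := by
  by_contra h
  obtain ⟨n, hn, hnc⟩ := hN _ (hp _ (Ultrafilter.compl_mem_iff_notMem.2 h))
  exact hnc hn

lemma MixingAlong.mixingAlongUltrafilter {T : X ≃ₜ X} {nseq : ℕ → ℤ} (hT : MixingAlong T nseq)
    {p : Ultrafilter ℤ} (hp : ∀ B ∈ p, B ∈ GA nseq) : MixingAlongUltrafilter p T := by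
  refine fun U hU hUne => eq_univ_of_forall fun y => ?_
  rw [mem_omegaLimit_ultrafilter_iff]
  intro N hN
  have hmix := mem_of_mem_dualFam hp
    (hT U (interior N) hU isOpen_interior hUne ⟨y, mem_interior_iff_mem_nhds.2 hN⟩)
  filter_upwards [hmix] with n ⟨x, hxU, hxN⟩
  rw [mem_preimage, hzpow_eq_zpow] at hxN
  exact ⟨x, hxU, show (T ^ n) x ∈ N from interior_subset hxN⟩

def piZPow {ι : Type*} (S : ι → X ≃ₜ X) (n : ℤ) : (ι → X) → ι → X :=
  Pi.map fun i => ⇑(S i ^ n)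

lemma continuous_piZPow {ι : Type*} (S : ι → X ≃ₜ X) (n : ℤ) : Continuous (piZPow S n) :=
  continuous_pi fun i => (S i ^ n).continuous.comp (continuous_apply i)

lemma piZPow_add {ι : Type*} (S : ι → X ≃ₜ X) (m n : ℤ) (z : ι → X) :
    piZPow S (m + n) z = piZPow S m (piZPow S n z) := by
  funext i
  simp only [piZPow, Pi.map_apply, zpow_add, Homeomorph.mul_apply]

/-- `(S₀ⁿ y, S₁ⁿ y, …)` is `(x, (S₁S₀⁻¹)ⁿ x, …)` with `x = S₀ⁿ y`. -/
theorem omegaLimit_piZPow_range_const_eq_univ (p : Ultrafilter ℤ) {e : ℕ}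
    (S : Fin (e + 1) → X ≃ₜ X) (hc : ∀ i, Commute (S i) (S 0))
    (hR : ∀ U : Set X, IsOpen U → U.Nonempty →
      ω (p : Filter ℤ) (piZPow fun i : Fin e => S i.succ * (S 0)⁻¹) (const (Fin e) '' U) = univ) :
    ω (p : Filter ℤ) (piZPow S) (range (const (Fin (e + 1)))) = univ := by
  refine eq_univ_of_forall fun z => (mem_omegaLimit_ultrafilter_iff _ _ _ _).2 fun N hN => ?_
  obtain ⟨t, ht, htN⟩ := exists_univ_pi_subset_of_mem_nhds hN
  have hz0 : (interior (t 0)).Nonempty := ⟨z 0, mem_interior_iff_mem_nhds.2 (ht 0)⟩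
  have hz : Fin.tail z ∈ ω (p : Filter ℤ) (piZPow fun i : Fin e => S i.succ * (S 0)⁻¹)
      (const (Fin e) '' interior (t 0)) := by
    rw [hR _ isOpen_interior hz0]
    exact mem_univ _
  have htail := (mem_omegaLimit_ultrafilter_iff _ _ _ _).1 hz (univ.pi fun i => t i.succ)
    (set_pi_mem_nhds finite_univ fun i _ => ht i.succ)
  filter_upwards [htail] with n ⟨_, ⟨x, hx, rfl⟩, hxt⟩
  refine ⟨const _ ((S 0 ^ n)⁻¹ x), mem_range_self _, htN fun i _ => ?_⟩
  refine Fin.cases ?_ (fun i => ?_) i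
  · simpa [piZPow] using interior_subset hx
  · have hRn : (S i.succ * (S 0)⁻¹) ^ n = S i.succ ^ n * (S 0 ^ n)⁻¹ := by
      rw [(hc i.succ).inv_right.mul_zpow, inv_zpow]
    simpa [piZPow, hRn] using hxt i (mem_univ i)

/-- A minimal `T` covers `X` by finitely many `T⁻ᵏ U`; by Baire one of their ω-limits has interior,
and `T^k`, commuting with the `Sᵢ`, moves it into the ω-limit of `U`. -/
theorem interior_omegaLimit_piZPow_nonempty [CompactSpace X] [T2Space X] {ι : Type*}
    (p : Ultrafilter ℤ) (S : ι → X ≃ₜ X) {T : X ≃ₜ X} (hT : IsMinimalHomeo T)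
    (hc : ∀ i, Commute T (S i))
    (hfull : ω (p : Filter ℤ) (piZPow S) (range (const ι)) = univ)
    {U : Set X} (hU : IsOpen U) (hUne : U.Nonempty) :
    (interior (ω (p : Filter ℤ) (piZPow S) (const ι '' U))).Nonempty := by
  obtain ⟨F, hF⟩ := hT.exists_finset_cover hU hUne
  have hcover : ⋃ k ∈ F, ω (p : Filter ℤ) (piZPow S) (const ι '' (⇑(T ^ k) ⁻¹' U)) = univ := by
    rw [← omegaLimit_biUnion_finset, ← hfull]
    refine subset_antisymm (omegaLimit_mono_right _ _ (by simp)) (omegaLimit_mono_right _ _ ?_)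
    rintro _ ⟨x, rfl⟩
    obtain ⟨k, hk, hx⟩ := mem_iUnion₂.1 (hF (mem_univ x))
    exact mem_biUnion hk ⟨x, hx, rfl⟩
  have : Nonempty (ι → X) := ⟨const ι hUne.some⟩
  obtain ⟨z, hz⟩ := (dense_biUnion_interior_of_closed (fun _ _ => isClosed_omegaLimit _ _ _)
    F.countable_toSet hcover).nonempty
  obtain ⟨k, -, hk⟩ := mem_iUnion₂.1 hz
  let Ψ : (ι → X) ≃ₜ (ι → X) := Homeomorph.piCongrRight fun _ => T ^ k
  have hΨ : MapsTo Ψ (ω (p : Filter ℤ) (piZPow S) (const ι '' (⇑(T ^ k) ⁻¹' U)))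
      (ω (p : Filter ℤ) (piZPow S) (const ι '' U)) := by
    refine mapsTo_omegaLimit _ (ga := Ψ) ?_ (fun n y => ?_) Ψ.continuous
    · rintro _ ⟨x, hx, rfl⟩
      exact ⟨_, hx, rfl⟩
    · funext i
      exact DFunLike.congr_fun ((hc i).zpow_zpow k n).eq (y i)
  refine ⟨Ψ z, interior_mono hΨ.image_subset ?_⟩
  rw [← Ψ.image_interior]
  exact mem_image_of_mem Ψ hk

/-- The interior contains a box `∏ uᵢ`, whose ω-limit is everything by mixing, and idempotence of
`p` gives `ω (ω s) ⊆ ω s`. -/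
theorem omegaLimit_piZPow_eq_univ_of_interior_nonempty {ι : Type*} [Finite ι]
    {p : Ultrafilter ℤ} (hp : p + p = p) (S : ι → X ≃ₜ X)
    (hS : ∀ i, MixingAlongUltrafilter p (S i)) {s : Set (ι → X)}
    (hs : (interior (ω (p : Filter ℤ) (piZPow S) s)).Nonempty) :
    ω (p : Filter ℤ) (piZPow S) s = univ := by
  obtain ⟨w, hw⟩ := hs
  obtain ⟨u, hu, hus⟩ := isOpen_pi_iff'.1 isOpen_interior w hw
  have hω : ∀ i, ω (p : Filter ℤ) (fun n => ⇑(S i ^ n)) (u i) = univ :=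
    fun i => hS i (u i) (hu i).1 ⟨w i, (hu i).2⟩
  have hbox : univ ⊆ ω (p : Filter ℤ) (piZPow S) (univ.pi u) := by
    have := univ_pi_omegaLimit_subset p (fun i n => ⇑(S i ^ n)) u
    rwa [funext hω, pi_univ] at this
  refine eq_univ_of_univ_subset ?_
  calc univ ⊆ ω (p : Filter ℤ) (piZPow S) (univ.pi u) := hbox
    _ ⊆ ω (p : Filter ℤ) (piZPow S) (ω (p : Filter ℤ) (piZPow S) s) :=
      omegaLimit_mono_right _ _ (hus.trans interior_subset)
    _ ⊆ ω (p : Filter ℤ) (piZPow S) s :=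
      omegaLimit_omegaLimit_subset_of_add_idem hp (continuous_piZPow S) (piZPow_add S) s

theorem omegaLimit_piZPow_const_eq_univ [CompactSpace X] [T2Space X] {p : Ultrafilter ℤ}
    (hp : p + p = p) : ∀ {e : ℕ} (S : Fin e → X ≃ₜ X), (∀ i j, Commute (S i) (S j)) →
    (∀ i, IsMinimalHomeo (S i) ∧ MixingAlongUltrafilter p (S i)) →
    (∀ i j, i ≠ j →
      IsMinimalHomeo (S i * (S j)⁻¹) ∧ MixingAlongUltrafilter p (S i * (S j)⁻¹)) →
    ∀ U : Set X, IsOpen U → U.Nonempty → ω (p : Filter ℤ) (piZPow S) (const (Fin e) '' U) = univ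
  | 0, _, _, _, _, _, _, hUne => (nonempty_omegaLimit _ _ _ (hUne.image _)).eq_univ
  | e + 1, S, hc, hS, hS', U, hU, hUne => by
    let R : Fin e → X ≃ₜ X := fun i => S i.succ * (S 0)⁻¹
    have hRc : ∀ i j, Commute (R i) (R j) := fun i j =>
      ((hc _ _).mul_left (hc _ _).inv_left).mul_right ((hc _ _).inv_right.mul_left (.refl _))
    have hRR : ∀ i j, R i * (R j)⁻¹ = S i.succ * (S j.succ)⁻¹ := fun i j => by simp only [R]; group
    have hR := omegaLimit_piZPow_const_eq_univ hp R hRc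
      (fun i => hS' i.succ 0 (Fin.succ_ne_zero i))
      (fun i j hij => hRR i j ▸ hS' _ _ ((Fin.succ_injective _).ne hij))
    exact omegaLimit_piZPow_eq_univ_of_interior_nonempty hp S (fun i => (hS i).2)
      (interior_omegaLimit_piZPow_nonempty p S (hS 0).1 (fun i => hc 0 i)
        (omegaLimit_piZPow_range_const_eq_univ p S (fun i => hc i 0) hR) hU hUne)

end Dynamics

/-- Linear case: if commuting homeomorphisms `Tᵢ` and all `T_j T_k⁻¹` are minimal
and mixing along the IP-set `A = {n_α}`, then
`{n : U ∩ T₁^{-n}V₁ ∩ ⋯ ∩ T_d^{-n}V_d ≠ ∅} ∈ 𝒢_A*`. -/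
theorem linear_case_commuting {X : Type*} [MetricSpace X] [CompactSpace X]
    (d : ℕ) (T : Fin d → X ≃ₜ X)
    (hcomm : ∀ i j, (T i).trans (T j) = (T j).trans (T i))
    (nseq : ℕ → ℤ)
    (hmix : ∀ i, IsMinimalHomeo (T i) ∧ MixingAlong (T i) nseq)
    (hmix2 : ∀ i j, i ≠ j →
      IsMinimalHomeo ((T j).symm.trans (T i)) ∧ MixingAlong ((T j).symm.trans (T i)) nseq)
    (U : Set X) (V : Fin d → Set X) (hU : IsOpen U) (hUne : U.Nonempty)
    (hV : ∀ i, IsOpen (V i)) (hVne : ∀ i, (V i).Nonempty) :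
    {m : ℤ | (U ∩ ⋂ i, hzpow (T i) m ⁻¹' V i).Nonempty} ∈ dualFam (GA nseq) := by
  rintro A ⟨a, ha, hA⟩
  obtain ⟨p, hp, hFU, hGA⟩ := exists_add_idempotent_ultrafilter_subset_GA nseq ha
  have hdense := omegaLimit_piZPow_const_eq_univ hp T (fun i j => hcomm j i)
    (fun i => ⟨(hmix i).1, (hmix i).2.mixingAlongUltrafilter hGA⟩)
    (fun i j hij => ⟨(hmix2 i j hij).1, (hmix2 i j hij).2.mixingAlongUltrafilter hGA⟩) U hU hUne
  obtain ⟨v, hv⟩ := univ_pi_nonempty_iff.2 hVne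
  have hret := (mem_omegaLimit_ultrafilter_iff _ _ _ v).1 (hdense ▸ mem_univ v) _
    ((isOpen_set_pi finite_univ fun i _ => hV i).mem_nhds hv)
  obtain ⟨m, ⟨_, ⟨x, hxU, rfl⟩, hxV⟩, hmA⟩ := (hret.and hFU).exists
  refine ⟨m, ⟨x, hxU, mem_iInter.2 fun i => ?_⟩, hA hmA⟩
  rw [mem_preimage, hzpow_eq_zpow]
  exact hxV i (mem_univ i)
end
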